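/- Let (G,ω) be a symplectic Lie algebra, i.e., ω is a nondegenerate skew-symmetric bilinear form satisfying the 2-cocycle condition ω([x,y],z) + ω([y,z],x) + ω([z,x],y) = 0. Then the product x*y defined by ω(x*y, z) = -ω(y,[x,z]) for all z is a left-symmetric algebra structure on G whose commutator x*y - y*x equals [x,y]. -/

import Mathlib

/-!
The defining identity `ω (x * y) z = -ω y ⁅x, z⁆` says that left multiplication by `x` is minus
the `ω`-transpose of `ad x`. Transposing the Jacobi identity therefore makes `x ↦ (x * ·)` a Lie
algebra representation, `⁅x, y⁆ * z = x * (y * z) - y * (x * z)`, using only nondegeneracy.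
Skew-symmetry and the cocycle identity give `ω (x * y - y * x) z = ω ⁅x, y⁆ z`, so the commutator
of `*` is the bracket. Substituting `⁅x, y⁆ = x * y - y * x` in the first identity is exactly
left-symmetry.
-/

theorem LinearMap.SeparatingLeft.injective {R M N P : Type*} [CommRing R] [AddCommGroup M]
    [AddCommGroup N] [AddCommGroup P] [Module R M] [Module R N] [Module R P]
    {B : M →ₗ[R] N →ₗ[R] P} (hB : B.SeparatingLeft) : Function.Injective B :=
  LinearMap.ker_eq_bot.mp (LinearMap.separatingLeft_iff_ker_eq_bot.mp hB)

namespace LieAlgebra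

variable {R L : Type*} [CommRing R] [LieRing L] [LieAlgebra R L]

theorem mul_assoc_symm_of_mul_lie {mul : L →ₗ[R] L →ₗ[R] L}
    (hcomm : ∀ x y : L, mul x y - mul y x = ⁅x, y⁆)
    (hrep : ∀ x y z : L, mul ⁅x, y⁆ z = mul x (mul y z) - mul y (mul x z)) (x y z : L) :
    mul (mul x y) z - mul x (mul y z) = mul (mul y x) z - mul y (mul x z) := by
  have h : mul (mul x y) z - mul (mul y x) z = mul x (mul y z) - mul y (mul x z) := by
    rw [← hrep, ← hcomm, map_sub, LinearMap.sub_apply]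
  exact sub_eq_sub_iff_sub_eq_sub.mp h

variable {ω : LinearMap.BilinForm R L} {mul : L →ₗ[R] L →ₗ[R] L}

theorem mul_lie_of_transpose_ad (hω : ω.SeparatingLeft)
    (hmul : ∀ x y z : L, ω (mul x y) z = -(ω y ⁅x, z⁆)) (x y z : L) :
    mul ⁅x, y⁆ z = mul x (mul y z) - mul y (mul x z) := by
  refine hω.injective (LinearMap.ext fun w => ?_)
  simp only [map_sub, LinearMap.sub_apply, hmul, neg_neg, lie_lie]
  ring

theorem mul_sub_mul_swap_of_transpose_ad (hω : ω.SeparatingLeft)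
    (hskew : ∀ x y : L, ω x y = -ω y x)
    (hcoc : ∀ x y z : L, ω ⁅x, y⁆ z + ω ⁅y, z⁆ x + ω ⁅z, x⁆ y = 0)
    (hmul : ∀ x y z : L, ω (mul x y) z = -(ω y ⁅x, z⁆)) (x y : L) :
    mul x y - mul y x = ⁅x, y⁆ := by
  refine hω.injective (LinearMap.ext fun w => ?_)
  have hc := hcoc x y w
  rw [hskew ⁅y, w⁆, hskew ⁅w, x⁆, ← lie_skew w x, map_neg] at hc
  simp only [map_sub, LinearMap.sub_apply, hmul]
  linear_combination -hc

end LieAlgebra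

open LieAlgebra in
theorem lsym_on_symplectic_lie_algebra (F : Type*) [Field F]
    (G : Type*) [LieRing G] [LieAlgebra F G]
    (ω : G →ₗ[F] G →ₗ[F] F)
    (hskew : ∀ x y : G, ω x y = -ω y x)
    (hnd : ∀ x : G, (∀ y : G, ω x y = 0) → x = 0)
    (hcoc : ∀ x y z : G, ω ⁅x, y⁆ z + ω ⁅y, z⁆ x + ω ⁅z, x⁆ y = 0)
    (mul : G →ₗ[F] G →ₗ[F] G)
    (hmul : ∀ x y z : G, ω (mul x y) z = -(ω y ⁅x, z⁆)) :
    (∀ x y z : G,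
      mul (mul x y) z - mul x (mul y z) = mul (mul y x) z - mul y (mul x z))
    ∧ (∀ x y : G, mul x y - mul y x = ⁅x, y⁆) := by
  have hcomm := mul_sub_mul_swap_of_transpose_ad hnd hskew hcoc hmul
  exact ⟨mul_assoc_symm_of_mul_lie hcomm (mul_lie_of_transpose_ad hnd hmul), hcomm⟩
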